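/- Let φ(t) be a real polynomial of degree 2m (with m > 1) with distinct roots and no repeated factors. The number of ordered pairs (g, h) of monic complex polynomials of degree m each with φ = g·h, such that not both g and h are real polynomials, is divisible by 4. -/

import Mathlib

open Polynomial

/-- A complex polynomial has all real coefficients. -/
def IsRealPoly (g : Polynomial ℂ) : Prop := ∀ i, (g.coeff i).im = 0

/-!
Swapping the two factors and conjugating their coefficients are commuting involutions of the
set of nonreal factorizations. Swapping has no fixed point because the roots are distinct,
conjugation has none because the factorization is nonreal, and their composite fixes exactly
the factorizations `(g, ḡ)`; off those, the Klein four-group acts freely, in orbits of size 4.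
The factorizations `(g, ḡ)` correspond, through the roots of `g`, to the sets `A` of roots of `φ`
such that `A` and `Ā` partition the roots. On these, conjugation `A ↦ Ā` and toggling a fixed
conjugate pair `{z, z̄}` generate a free Klein four-group action once `φ` has more than two
roots: `Ā ∆ {z, z̄} = A` would make `{z, z̄} = A ∆ Ā` the set of all roots.
-/

open Function Finset ComplexConjugate
open scoped symmDiff

section KleinFour

variable {α : Type*} {f g : α → α}

theorem Finset.four_dvd_card_of_commute_involutive [DecidableEq α]
    (hf : Involutive f) (hg : Involutive g) (hfg : Function.Commute f g)
    (hf₁ : ∀ x, f x ≠ x) (hg₁ : ∀ x, g x ≠ x) (hfg₁ : ∀ x, f (g x) ≠ x)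
    (s : Finset α) (hfs : ∀ x ∈ s, f x ∈ s) (hgs : ∀ x ∈ s, g x ∈ s) : 4 ∣ #s := by
  induction s using Finset.strongInduction with
  | H s ih =>
  obtain rfl | ⟨x, hx⟩ := s.eq_empty_or_nonempty
  · simp
  set q : Finset α := {x, f x, g x, f (g x)} with hq
  have hq_card : #q = 4 := card_eq_four.2 ⟨x, f x, g x, f (g x),
    (hf₁ x).symm, (hg₁ x).symm, (hfg₁ x).symm,
    fun h => hfg₁ x (by rw [← h, hf x]), fun h => hg₁ x (hf.injective h.symm),
    (hf₁ (g x)).symm, rfl⟩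
  have hq_f : ∀ y, f y ∈ q ↔ y ∈ q := by
    intro y
    simp only [hq, mem_insert, mem_singleton, hf.eq_iff, hf x, hf (g x)]
    tauto
  have hq_g : ∀ y, g y ∈ q ↔ y ∈ q := by
    intro y
    simp only [hq, mem_insert, mem_singleton, hg.eq_iff, hg x, ← hfg x, ← hfg (g x)]
    tauto
  have hqs : q ⊆ s := by
    simp only [hq, insert_subset_iff, singleton_subset_iff]
    exact ⟨hx, hfs x hx, hgs x hx, hfs _ (hgs x hx)⟩
  have hrest : 4 ∣ #(s \ q) :=
    ih _ (sdiff_ssubset hqs ⟨x, by simp [hq]⟩)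
      (fun y hy => by simp only [mem_sdiff, hq_f] at hy ⊢; exact ⟨hfs y hy.1, hy.2⟩)
      (fun y hy => by simp only [mem_sdiff, hq_g] at hy ⊢; exact ⟨hgs y hy.1, hy.2⟩)
  rw [card_sdiff_of_subset hqs, hq_card] at hrest
  have := card_le_card hqs
  omega

theorem four_dvd_natCard_of_commute_involutive
    (hf : Involutive f) (hg : Involutive g) (hfg : Function.Commute f g)
    (hf₁ : ∀ x, f x ≠ x) (hg₁ : ∀ x, g x ≠ x) (hfg₁ : ∀ x, f (g x) ≠ x) :
    4 ∣ Nat.card α := by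
  classical
  cases finite_or_infinite α
  · have := Fintype.ofFinite α
    rw [Nat.card_eq_fintype_card, ← card_univ]
    exact Finset.four_dvd_card_of_commute_involutive hf hg hfg hf₁ hg₁ hfg₁ _
      (fun x _ => mem_univ _) (fun x _ => mem_univ _)
  · simp

theorem Set.four_dvd_ncard_of_commute_involutive {s : Set α}
    (hfs : Set.MapsTo f s s) (hgs : Set.MapsTo g s s)
    (hf : ∀ x ∈ s, f (f x) = x) (hg : ∀ x ∈ s, g (g x) = x)
    (hfg : ∀ x ∈ s, f (g x) = g (f x))
    (hf₁ : ∀ x ∈ s, f x ≠ x) (hg₁ : ∀ x ∈ s, g x ≠ x)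
    (hfg₁ : ∀ x ∈ s, f (g x) ≠ x) :
    4 ∣ s.ncard :=
  four_dvd_natCard_of_commute_involutive (f := hfs.restrict) (g := hgs.restrict)
    (fun x => Subtype.ext (hf x x.2)) (fun x => Subtype.ext (hg x x.2))
    (fun x => Subtype.ext (hfg x x.2)) (fun x h => hf₁ x x.2 (congrArg Subtype.val h))
    (fun x h => hg₁ x x.2 (congrArg Subtype.val h))
    (fun x h => hfg₁ x x.2 (congrArg Subtype.val h))

end KleinFour

section Halves

variable {β : Type*} [DecidableEq β] {c : β → β} {R A P : Finset β}

def IsHalf (c : β → β) (R A : Finset β) : Prop :=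
  Disjoint A (A.image c) ∧ A ∪ A.image c = R

theorem IsHalf.image (hc : Involutive c) (hA : IsHalf c R A) : IsHalf c R (A.image c) := by
  rw [IsHalf, image_image, hc.comp_self, image_id, union_comm]
  exact ⟨hA.1.symm, hA.2⟩

theorem IsHalf.symmDiff (hc : Involutive c) (hPc : P.image c = P) (hPR : P ⊆ R)
    (hA : IsHalf c R A) : IsHalf c R (A ∆ P) := by
  obtain ⟨hdisj, rfl⟩ := hA
  rw [IsHalf, image_symmDiff _ _ hc.injective, hPc]
  refine ⟨disjoint_left.2 fun x => ?_, ext fun x => ?_⟩ <;>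
  · have hxA : x ∈ A → x ∉ A.image c := fun h => disjoint_left.1 hdisj h
    have hxP : x ∈ P → x ∈ A ∪ A.image c := fun h => hPR h
    simp only [mem_symmDiff, mem_union] at hxA hxP ⊢
    tauto

theorem IsHalf.card_eq (hc : Injective c) (hA : IsHalf c R A) : #R = 2 * #A := by
  rw [← hA.2, card_union_of_disjoint hA.1, card_image_of_injective _ hc, two_mul]

theorem IsHalf.image_eq_self (hc : Involutive c) (hA : IsHalf c R A) : R.image c = R := by
  rw [← hA.2, image_union, image_image, hc.comp_self, image_id, union_comm]

theorem four_dvd_ncard_isHalf (hc : Involutive c) (hR : 2 < #R) :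
    4 ∣ {A | IsHalf c R A}.ncard := by
  obtain h | ⟨A₀, hA₀⟩ := Set.eq_empty_or_nonempty {A | IsHalf c R A}
  · simp [h]
  obtain ⟨z, hz⟩ : R.Nonempty := card_pos.1 (by omega)
  set P : Finset β := {z, c z}
  have hPc : P.image c = P := by rw [image_insert, image_singleton, hc z, pair_comm]
  have hPR : P ⊆ R := by
    rw [insert_subset_iff, singleton_subset_iff]
    exact ⟨hz, IsHalf.image_eq_self hc hA₀ ▸ mem_image_of_mem c hz⟩
  have hPcard : #P ≤ 2 := card_le_two
  refine Set.four_dvd_ncard_of_commute_involutive (s := {A | IsHalf c R A}) (f := image c)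
    (g := (· ∆ P)) (fun _ hA => hA.image hc)
    (fun _ hA => hA.symmDiff hc hPc hPR) ?_ ?_ ?_ ?_ ?_ ?_
  · intro A _
    simp only [image_image, hc.comp_self, image_id]
  · intro A _
    exact symmDiff_symmDiff_cancel_right _ _
  · intro A _
    simp only [image_symmDiff _ _ hc.injective, hPc]
  · intro A hA h
    have hempty := hA.1
    rw [h, disjoint_self, bot_eq_empty] at hempty
    have hR' := hA.card_eq hc.injective
    rw [hempty, card_empty] at hR'
    omega
  · intro A _ h
    rw [symmDiff_eq_left] at h
    exact (insert_nonempty z _).ne_empty h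
  · intro A hA h
    rw [image_symmDiff _ _ hc.injective, hPc] at h
    have hPR' : P = R := by
      rw [← symmDiff_symmDiff_cancel_left (A.image c) P, h, hA.1.symm.symmDiff_eq_sup,
        sup_eq_union, union_comm, hA.2]
    rw [hPR'] at hPcard
    omega

end Halves

theorem Polynomial.prod_X_sub_C_roots_toFinset {K : Type*} [Field K] [IsAlgClosed K]
    [DecidableEq K] {q : K[X]} (hq : q.Monic) (hnd : q.roots.Nodup) :
    ∏ a ∈ q.roots.toFinset, (X - C a) = q := by
  rw [prod_eq_multiset_prod, Multiset.toFinset_val, hnd.dedup,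
    ← (IsAlgClosed.splits q).eq_prod_roots_of_monic hq]

theorem Polynomial.natDegree_eq_zero_of_eq_mul_self {K : Type*} [Field K] [IsAlgClosed K]
    {Φ q : K[X]} (hΦ : Φ.roots.Nodup) (h : Φ = q * q) : q.natDegree = 0 := by
  rcases eq_or_ne Φ 0 with rfl | hΦ₀
  · simp [mul_self_eq_zero.1 h.symm]
  have hsep := (nodup_roots_iff_of_splits hΦ₀ (IsAlgClosed.splits Φ)).1 hΦ
  exact natDegree_eq_zero_of_isUnit (hsep.squarefree q ⟨1, by rw [h, mul_one]⟩)

theorem map_conj_map_conj (q : ℂ[X]) : (q.map conj).map conj = q := by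
  rw [Polynomial.map_map, RingHomInvPair.comp_eq₂, map_id]

theorem isRealPoly_iff_map_conj_eq (q : ℂ[X]) : IsRealPoly q ↔ q.map conj = q := by
  simp only [IsRealPoly, Polynomial.ext_iff, coeff_map, Complex.conj_eq_iff_im]

theorem map_conj_prod_X_sub_C (A : Finset ℂ) :
    (∏ a ∈ A, (X - C a)).map conj = ∏ a ∈ A.image conj, (X - C a) := by
  rw [Polynomial.map_prod, prod_image fun a _ b _ h => (RingHom.injective conj) h]
  simp

theorem isHalf_roots_toFinset {Φ q : ℂ[X]} (hΦ₀ : Φ ≠ 0) (hnd : Φ.roots.Nodup)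
    (h : Φ = q * q.map conj) : IsHalf conj Φ.roots.toFinset q.roots.toFinset := by
  have hroots : Φ.roots = q.roots + q.roots.map conj := by
    rw [h, roots_mul (h ▸ hΦ₀), (IsAlgClosed.splits q).roots_map]
  rw [hroots, Multiset.nodup_add] at hnd
  rw [hroots, Multiset.toFinset_add, Multiset.toFinset_map]
  refine ⟨?_, rfl⟩
  rw [← Multiset.toFinset_map]
  exact Multiset.disjoint_toFinset.2 hnd.2.2

def nonrealFactorizations (Φ : ℂ[X]) (m : ℕ) : Set (ℂ[X] × ℂ[X]) :=
  {p | p.1.Monic ∧ p.2.Monic ∧ p.1.natDegree = m ∧ p.2.natDegree = m ∧ Φ = p.1 * p.2 ∧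
    ¬(IsRealPoly p.1 ∧ IsRealPoly p.2)}

namespace nonrealFactorizations

variable {Φ : ℂ[X]} {m : ℕ} {p : ℂ[X] × ℂ[X]} {A : Finset ℂ}

theorem swap_mem (hp : p ∈ nonrealFactorizations Φ m) :
    p.swap ∈ nonrealFactorizations Φ m := by
  obtain ⟨h₁, h₂, hd₁, hd₂, hΦ, hreal⟩ := hp
  exact ⟨h₂, h₁, hd₂, hd₁, hΦ.trans (mul_comm _ _), fun h => hreal h.symm⟩

theorem map_conj_mem (hΦ : Φ.map conj = Φ) (hp : p ∈ nonrealFactorizations Φ m) :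
    p.map (Polynomial.map conj) (Polynomial.map conj) ∈ nonrealFactorizations Φ m := by
  obtain ⟨h₁, h₂, hd₁, hd₂, rfl, hreal⟩ := hp
  simp only [isRealPoly_iff_map_conj_eq] at hreal
  refine ⟨h₁.map _, h₂.map _, by simpa, by simpa,
    by rw [Prod.map_fst, Prod.map_snd, ← Polynomial.map_mul, hΦ], ?_⟩
  simp only [isRealPoly_iff_map_conj_eq, Prod.map_fst, Prod.map_snd, map_conj_map_conj]
  exact fun h => hreal ⟨h.1.symm, h.2.symm⟩

theorem fst_ne_snd (hnd : Φ.roots.Nodup) (hm : m ≠ 0) (hp : p ∈ nonrealFactorizations Φ m) :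
    p.1 ≠ p.2 := fun h =>
  hm (hp.2.2.1 ▸ natDegree_eq_zero_of_eq_mul_self hnd (h ▸ hp.2.2.2.2.1))

theorem four_dvd_ncard_sdiff (hΦ : Φ.map conj = Φ) (hnd : Φ.roots.Nodup) (hm : m ≠ 0) :
    4 ∣ (nonrealFactorizations Φ m \ {p | p.2 = p.1.map conj}).ncard := by
  refine Set.four_dvd_ncard_of_commute_involutive (f := Prod.swap)
    (g := Prod.map (Polynomial.map conj) (Polynomial.map conj)) ?_ ?_ (fun p _ => p.swap_swap)
    (fun p _ => Prod.ext (map_conj_map_conj _) (map_conj_map_conj _)) (fun p _ => rfl)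
    (fun p hp h => fst_ne_snd hnd hm hp.1 (congrArg Prod.snd h)) ?_
    (fun p hp h => hp.2 (congrArg Prod.snd h).symm)
  · intro p hp
    refine ⟨swap_mem hp.1, fun h => hp.2 ?_⟩
    simp only [Set.mem_ofPred_eq, Prod.fst_swap, Prod.snd_swap] at h ⊢
    rw [h, map_conj_map_conj]
  · intro p hp
    refine ⟨map_conj_mem hΦ hp.1, fun h => hp.2 ?_⟩
    simp only [Set.mem_ofPred_eq, Prod.map_fst, Prod.map_snd, map_conj_map_conj] at h ⊢
    rw [← h, map_conj_map_conj]
  · intro p hp h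
    simp only [Prod.ext_iff, Prod.map_fst, Prod.map_snd, ← isRealPoly_iff_map_conj_eq] at h
    exact hp.1.2.2.2.2.2 h

theorem prod_X_sub_C_mem (hmon : Φ.Monic) (hnd : Φ.roots.Nodup) (hdeg : Φ.natDegree = 2 * m)
    (hm : m ≠ 0) (hA : IsHalf conj Φ.roots.toFinset A) :
    (∏ a ∈ A, (X - C a), (∏ a ∈ A, (X - C a)).map conj) ∈ nonrealFactorizations Φ m := by
  set q := ∏ a ∈ A, (X - C a)
  have hq : q.Monic := monic_prod_of_monic _ _ fun a _ => monic_X_sub_C a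
  have hqdeg : q.natDegree = m := by
    have hcard := hA.card_eq (RingHom.injective _)
    rw [Multiset.toFinset_card_of_nodup hnd, IsAlgClosed.card_roots_eq_natDegree, hdeg] at hcard
    rw [natDegree_finsetProd_X_sub_C_eq_card]
    omega
  have hΦ : Φ = q * q.map conj := by
    rw [map_conj_prod_X_sub_C, ← prod_union hA.1, hA.2, prod_X_sub_C_roots_toFinset hmon hnd]
  refine ⟨hq, hq.map _, hqdeg, by rwa [natDegree_map], hΦ, fun hreal => hm ?_⟩
  rw [(isRealPoly_iff_map_conj_eq q).1 hreal.1] at hΦ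
  exact hqdeg ▸ natDegree_eq_zero_of_eq_mul_self hnd hΦ

theorem inter_selfConj_eq_image (hmon : Φ.Monic) (hnd : Φ.roots.Nodup)
    (hdeg : Φ.natDegree = 2 * m) (hm : m ≠ 0) :
    nonrealFactorizations Φ m ∩ {p | p.2 = p.1.map conj} =
      (fun A => (∏ a ∈ A, (X - C a), (∏ a ∈ A, (X - C a)).map conj)) ''
        {A | IsHalf conj Φ.roots.toFinset A} := by
  ext ⟨q, h⟩
  simp only [Set.mem_inter_iff, Set.mem_ofPred_eq, Set.mem_image, Prod.mk.injEq]
  constructor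
  · rintro ⟨⟨hq, -, -, -, hΦ, -⟩, rfl⟩
    have hqnd : q.roots.Nodup :=
      Multiset.nodup_of_le (roots.le_of_dvd hmon.ne_zero ⟨_, hΦ⟩) hnd
    have hq_eq := prod_X_sub_C_roots_toFinset hq hqnd
    exact ⟨q.roots.toFinset, isHalf_roots_toFinset hmon.ne_zero hnd hΦ, hq_eq, by rw [hq_eq]⟩
  · rintro ⟨A, hA, rfl, rfl⟩
    exact ⟨prod_X_sub_C_mem hmon hnd hdeg hm hA, rfl⟩

theorem four_dvd_ncard_inter_selfConj (hmon : Φ.Monic) (hnd : Φ.roots.Nodup)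
    (hdeg : Φ.natDegree = 2 * m) (hm : 1 < m) :
    4 ∣ (nonrealFactorizations Φ m ∩ {p | p.2 = p.1.map conj}).ncard := by
  have hinj : Injective fun A : Finset ℂ =>
      (∏ a ∈ A, (X - C a), (∏ a ∈ A, (X - C a)).map conj) := fun A B h =>
    val_inj.1 (by simpa only [roots_prod_X_sub_C] using congrArg (fun p => roots p.1) h)
  rw [inter_selfConj_eq_image hmon hnd hdeg (by omega), Set.ncard_image_of_injective _ hinj]
  refine four_dvd_ncard_isHalf Complex.conj_conj ?_
  rw [Multiset.toFinset_card_of_nodup hnd, IsAlgClosed.card_roots_eq_natDegree, hdeg]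
  omega

end nonrealFactorizations

theorem nonreal_factorizations_div_four (m : ℕ) (hm : 1 < m)
    (φ : Polynomial ℝ) (hmonic : φ.Monic) (hdeg : φ.natDegree = 2 * m)
    (hnodup : ((φ.map (algebraMap ℝ ℂ)).roots).Nodup) :
    4 ∣ Set.ncard {p : Polynomial ℂ × Polynomial ℂ |
        p.1.Monic ∧ p.2.Monic ∧ p.1.natDegree = m ∧ p.2.natDegree = m ∧
        φ.map (algebraMap ℝ ℂ) = p.1 * p.2 ∧
        ¬(IsRealPoly p.1 ∧ IsRealPoly p.2)} := by
  set Φ := φ.map (algebraMap ℝ ℂ)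
  have hmon : Φ.Monic := hmonic.map _
  have hdegΦ : Φ.natDegree = 2 * m := by rw [natDegree_map, hdeg]
  have hreal : Φ.map conj = Φ := by
    rw [Polynomial.map_map]
    exact congrArg φ.map (RingHom.ext Complex.conj_ofReal)
  change 4 ∣ (nonrealFactorizations Φ m).ncard
  obtain hfin | hinf := (nonrealFactorizations Φ m).finite_or_infinite
  · rw [← Set.ncard_inter_add_ncard_sdiff_eq_ncard _ {p | p.2 = p.1.map conj} hfin]
    exact dvd_add (nonrealFactorizations.four_dvd_ncard_inter_selfConj hmon hnodup hdegΦ hm)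
      (nonrealFactorizations.four_dvd_ncard_sdiff hreal hnodup (by omega))
  · rw [hinf.ncard]
    exact dvd_zero 4
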